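/- Let q be a power of an odd prime. The subset H of 𝓜 consisting of the matrices [[a,b,0],[c,d,0],[0,0,1]] with a,b,c,d ∈ 𝔽_q and ad − bc = 1 is a normal subgroup of 𝓜 isomorphic to SL(2,q), and H equals the commutator subgroup of 𝓜. -/

import Mathlib

/-!
Write `δ = ad - bc`. The equations defining `𝓜` say exactly that the Frobenius `x ↦ x ^ q`
multiplies each of `a, b, c, d` by `δ⁻¹`, so an element of `𝓜` has its entries in `𝔽_q` iff
`δ = 1`: that is, `H = 𝓜 ∩ ker det`. Normality of `H` and `⁅𝓜, 𝓜⁆ ≤ H` follow at once.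
Conversely, pick `μ` with `μ ^ (q + 1) = -1`; then `D = diag(-μ, μ, 1)` lies in `𝓜`, and
conjugation by `D` inverts every unipotent element of `H`, so `⁅D, x⁆ = x⁻²`. Since `2` is
invertible, every elementary transvection with entries in `𝔽_q` is a commutator, and these
generate `SL(2, q) ≅ H`.
-/

namespace Subgroup

variable {G : Type*} [Group G]

theorem sq_mem_commutator_of_mul_eq_inv_mul {M : Subgroup G} {d x : G} (hd : d ∈ M)
    (hx : x ∈ M) (h : d * x = x⁻¹ * d) : x ^ 2 ∈ ⁅M, M⁆ := by
  have := inv_mem (commutator_mem_commutator hd hx)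
  rwa [commutatorElement_def, h, mul_inv_cancel_right, ← mul_inv_rev, ← sq, inv_inv] at this

theorem commutator_le_inf_ker {A : Type*} [CommGroup A] (M : Subgroup G) (f : G →* A) :
    ⁅M, M⁆ ≤ M ⊓ f.ker :=
  le_inf M.commutator_le_self
    ((commutator_mono le_top le_top).trans (Abelianization.commutator_subset_ker f))

end Subgroup

namespace FiniteField

variable {F : Type*} [Field F] [Fintype F]

theorem ringChar_ne_two_of_odd_card (h : Odd (Fintype.card F)) : ringChar F ≠ 2 := by
  rwa [Ne, even_card_iff_char_two, ← Nat.even_iff, Nat.not_even_iff_odd]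

-- `μ = ν ^ ((q - 1) / 2)` for a non-square `ν`: by Euler's criterion `ν ^ ((q ^ 2 - 1) / 2) = -1`.
theorem exists_pow_succ_eq_neg_one {q : ℕ} (hF : Fintype.card F = q ^ 2) (hq : Odd q) :
    ∃ μ : Fˣ, (μ : F) ^ (q + 1) = -1 := by
  have hchar := ringChar_ne_two_of_odd_card (hF ▸ hq.pow)
  obtain ⟨ν, hν⟩ := exists_nonsquare hchar
  have hν0 : ν ≠ 0 := by rintro rfl; exact hν IsSquare.zero
  have hpow : ν ^ (q ^ 2 / 2) = -1 := by
    rw [← hF]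
    exact (pow_dichotomy hchar hν0).resolve_left (mt (isSquare_iff hchar hν0).mpr hν)
  obtain ⟨k, rfl⟩ := hq
  refine ⟨Units.mk0 ν hν0 ^ k, ?_⟩
  have hexp : (2 * k + 1) ^ 2 / 2 = k * (2 * k + 1 + 1) := by
    rw [show (2 * k + 1) ^ 2 = 1 + 2 * (k * (2 * k + 1 + 1)) by ring,
      Nat.add_mul_div_left _ _ two_pos]
    simp
  rwa [Units.val_pow_eq_pow_val, Units.val_mk0, ← pow_mul, ← hexp]

end FiniteField

namespace Matrix

variable {R : Type*} [CommRing R]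

def blockDiagOne : Matrix (Fin 2) (Fin 2) R →* Matrix (Fin 3) (Fin 3) R where
  toFun A := !![A 0 0, A 0 1, 0; A 1 0, A 1 1, 0; 0, 0, 1]
  map_one' := by ext i j; fin_cases i <;> fin_cases j <;> rfl
  map_mul' A B := by
    ext i j; fin_cases i <;> fin_cases j <;> simp [Matrix.mul_apply, Fin.sum_univ_succ]

theorem det_fin_three_of_block (a b c d : R) :
    !![a, b, 0; c, d, 0; 0, 0, 1].det = a * d - b * c := by
  simp [det_fin_three]

namespace SpecialLinearGroup

def toGLThree : SpecialLinearGroup (Fin 2) R →* GL (Fin 3) R :=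
  (Units.map blockDiagOne).comp toGL

theorem coe_toGLThree (g : SpecialLinearGroup (Fin 2) R) :
    (toGLThree g : Matrix (Fin 3) (Fin 3) R) = !![g 0 0, g 0 1, 0; g 1 0, g 1 1, 0; 0, 0, 1] :=
  rfl

theorem toGLThree_injective : Function.Injective (toGLThree (R := R)) := by
  intro g h hgh
  have hentry (i j : Fin 3) :=
    congrArg (fun x : GL (Fin 3) R => (x : Matrix (Fin 3) (Fin 3) R) i j) hgh
  ext i j
  fin_cases i <;> fin_cases j
  · simpa [coe_toGLThree] using hentry 0 0
  · simpa [coe_toGLThree] using hentry 0 1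
  · simpa [coe_toGLThree] using hentry 1 0
  · simpa [coe_toGLThree] using hentry 1 1

def upperTransvection (t : R) : SpecialLinearGroup (Fin 2) R := ⟨!![1, t; 0, 1], by simp⟩

def lowerTransvection (t : R) : SpecialLinearGroup (Fin 2) R := ⟨!![1, 0; t, 1], by simp⟩

@[simp]
theorem coe_upperTransvection (t : R) :
    (upperTransvection t : Matrix (Fin 2) (Fin 2) R) = !![1, t; 0, 1] := rfl

@[simp]
theorem coe_lowerTransvection (t : R) :
    (lowerTransvection t : Matrix (Fin 2) (Fin 2) R) = !![1, 0; t, 1] := rfl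

theorem upperTransvection_add (s t : R) :
    upperTransvection (s + t) = upperTransvection s * upperTransvection t := by
  ext : 1; simp [add_comm]

theorem lowerTransvection_add (s t : R) :
    lowerTransvection (s + t) = lowerTransvection s * lowerTransvection t := by
  ext : 1; simp

variable {K : Type*} [Field K]

theorem eq_upper_mul_lower_mul_upper (g : SpecialLinearGroup (Fin 2) K) (hc : g 1 0 ≠ 0) :
    g = upperTransvection ((g 0 0 - 1) / g 1 0) * lowerTransvection (g 1 0) *
      upperTransvection ((g 1 1 - 1) / g 1 0) := by
  have hdet : g 0 0 * g 1 1 - g 0 1 * g 1 0 = 1 := by rw [← det_fin_two]; exact g.det_coe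
  ext i j
  fin_cases i <;> fin_cases j <;> simp [coe_mul, mul_apply, Fin.sum_univ_two]
  · field_simp; ring
  · field_simp; linear_combination -hdet
  · field_simp; ring

theorem eq_top_of_transvection_mem {N : Subgroup (SpecialLinearGroup (Fin 2) K)}
    (hu : ∀ t, upperTransvection t ∈ N) (hl : ∀ t, lowerTransvection t ∈ N) : N = ⊤ := by
  have mem_of_ne : ∀ g : SpecialLinearGroup (Fin 2) K, g 1 0 ≠ 0 → g ∈ N := fun g hc => by
    rw [eq_upper_mul_lower_mul_upper g hc]
    exact N.mul_mem (N.mul_mem (hu _) (hl _)) (hu _)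
  refine eq_top_iff.2 fun g _ => ?_
  by_cases hc : g 1 0 = 0
  · have hd : g 1 1 ≠ 0 := by
      intro hd
      have hdet := g.det_coe
      rw [det_fin_two, hc, hd] at hdet
      simp at hdet
    have hc' : (g * lowerTransvection 1 : SpecialLinearGroup (Fin 2) K) 1 0 ≠ 0 := by
      simpa [coe_mul, mul_apply, Fin.sum_univ_two, hc] using hd
    simpa using N.mul_mem (mem_of_ne _ hc') (N.inv_mem (hl 1))
  · exact mem_of_ne g hc

end SpecialLinearGroup

namespace GeneralLinearGroup

variable {K : Type*} [Field K]

def twistedDiag (μ : Kˣ) : GL (Fin 3) K :=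
  mkOfDetNeZero !![-(μ : K), 0, 0; 0, (μ : K), 0; 0, 0, 1] (by simp [det_fin_three])

theorem coe_twistedDiag (μ : Kˣ) :
    (twistedDiag μ : Matrix (Fin 3) (Fin 3) K) = !![-(μ : K), 0, 0; 0, (μ : K), 0; 0, 0, 1] :=
  rfl

-- Conjugation by `diag(-μ, μ)` negates the off-diagonal entries; for `g ∈ SL₂` this gives `g⁻¹`
-- exactly when `g 0 0 = g 1 1`.
theorem twistedDiag_mul_toGLThree (μ : Kˣ) {g : SpecialLinearGroup (Fin 2) K}
    (hg : g 0 0 = g 1 1) :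
    twistedDiag μ * SpecialLinearGroup.toGLThree g =
      (SpecialLinearGroup.toGLThree g)⁻¹ * twistedDiag μ := by
  rw [← map_inv]
  ext i j
  simp only [Units.val_mul, coe_twistedDiag, SpecialLinearGroup.coe_toGLThree,
    SpecialLinearGroup.coe_inv, adjugate_fin_two, mul_fin_three]
  fin_cases i <;> fin_cases j <;> simp [hg, mul_comm]

end GeneralLinearGroup

end Matrix

open Matrix SpecialLinearGroup

namespace Subfield

variable {F : Type*} [Field F]

def slTwoToGLThree (Fq : Subfield F) : SpecialLinearGroup (Fin 2) Fq →* GL (Fin 3) F :=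
  toGLThree.comp (SpecialLinearGroup.map Fq.subtype)

theorem slTwoToGLThree_injective (Fq : Subfield F) : Function.Injective Fq.slTwoToGLThree :=
  toGLThree_injective.comp fun _ _ h =>
    Subtype.ext (Matrix.map_injective Subtype.val_injective (congrArg Subtype.val h))

theorem range_slTwoToGLThree {Fq : Subfield F} {H : Subgroup (GL (Fin 3) F)}
    (hH : ∀ g : GL (Fin 3) F, g ∈ H ↔ ∃ a b c d : F,
      (g : Matrix (Fin 3) (Fin 3) F) = !![a, b, 0; c, d, 0; 0, 0, 1] ∧
      a ∈ Fq ∧ b ∈ Fq ∧ c ∈ Fq ∧ d ∈ Fq ∧ a * d - b * c = 1) :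
    Fq.slTwoToGLThree.range = H := by
  ext x
  rw [MonoidHom.mem_range, hH]
  constructor
  · rintro ⟨g, rfl⟩
    have hdet := congrArg Fq.subtype g.det_coe
    rw [det_fin_two] at hdet
    exact ⟨_, _, _, _, rfl, (g 0 0).2, (g 0 1).2, (g 1 0).2, (g 1 1).2, by simpa using hdet⟩
  · rintro ⟨a, b, c, d, hx, ha, hb, hc, hd, hdet⟩
    refine ⟨⟨!![⟨a, ha⟩, ⟨b, hb⟩; ⟨c, hc⟩, ⟨d, hd⟩], ?_⟩, Units.ext (by rw [hx]; rfl)⟩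
    rw [det_fin_two_of]
    exact Subtype.ext (by simpa using hdet)

theorem range_slTwoToGLThree_le_commutator {Fq : Subfield F} (h2 : (2 : F) ≠ 0)
    {M : Subgroup (GL (Fin 3) F)} (hM : Fq.slTwoToGLThree.range ≤ M) {μ : Fˣ}
    (hμ : GeneralLinearGroup.twistedDiag μ ∈ M) : Fq.slTwoToGLThree.range ≤ ⁅M, M⁆ := by
  have : NeZero (2 : Fq) :=
    ⟨fun h => h2 (by simpa only [map_ofNat, map_zero] using congrArg Fq.subtype h)⟩
  have hsq (g : SpecialLinearGroup (Fin 2) Fq) (hg : g 0 0 = g 1 1) :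
      Fq.slTwoToGLThree g ^ 2 ∈ ⁅M, M⁆ :=
    Subgroup.sq_mem_commutator_of_mul_eq_inv_mul hμ (hM ⟨g, rfl⟩)
      (GeneralLinearGroup.twistedDiag_mul_toGLThree μ (congrArg Subtype.val hg))
  rw [MonoidHom.range_eq_map, Subgroup.map_le_iff_le_comap, top_le_iff]
  refine eq_top_of_transvection_mem (fun t => ?_) (fun t => ?_)
  · rw [Subgroup.mem_comap, ← add_halves t, upperTransvection_add, ← sq, map_pow]
    exact hsq _ rfl
  · rw [Subgroup.mem_comap, ← add_halves t, lowerTransvection_add, ← sq, map_pow]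
    exact hsq _ rfl

end Subfield

theorem eq_inf_ker_det_of_mem_iff {F : Type*} [Field F] {q : ℕ} {Fq : Subfield F}
    (hFq : ∀ x : F, x ∈ Fq ↔ x ^ q = x) {M : Subgroup (GL (Fin 3) F)}
    (hM : ∀ g : GL (Fin 3) F, g ∈ M ↔ ∃ a b c d : F,
      (g : Matrix (Fin 3) (Fin 3) F) = !![a, b, 0; c, d, 0; 0, 0, 1] ∧
      a * c ^ q - a ^ q * c = 0 ∧ b * d ^ q - b ^ q * d = 0 ∧
      b * c ^ q - a ^ q * d = -1 ∧ a * d ^ q - b ^ q * c = 1)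
    {H : Subgroup (GL (Fin 3) F)}
    (hH : ∀ g : GL (Fin 3) F, g ∈ H ↔ ∃ a b c d : F,
      (g : Matrix (Fin 3) (Fin 3) F) = !![a, b, 0; c, d, 0; 0, 0, 1] ∧
      a ∈ Fq ∧ b ∈ Fq ∧ c ∈ Fq ∧ d ∈ Fq ∧ a * d - b * c = 1) :
    H = M ⊓ GeneralLinearGroup.det.ker := by
  ext g
  rw [Subgroup.mem_inf, hH, hM, MonoidHom.mem_ker, Units.ext_iff,
    GeneralLinearGroup.val_det_apply, Units.val_one]
  constructor
  · rintro ⟨a, b, c, d, hg, ha, hb, hc, hd, hdet⟩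
    rw [hFq] at ha hb hc hd
    refine ⟨⟨a, b, c, d, hg, ?_, ?_, ?_, ?_⟩, by rw [hg, det_fin_three_of_block, hdet]⟩ <;>
      simp only [ha, hb, hc, hd]
    · ring
    · ring
    · linear_combination -hdet
    · linear_combination hdet
  · rintro ⟨⟨a, b, c, d, hg, h₁, h₂, h₃, h₄⟩, hdet⟩
    rw [hg, det_fin_three_of_block] at hdet
    refine ⟨a, b, c, d, hg, (hFq a).2 ?_, (hFq b).2 ?_, (hFq c).2 ?_, (hFq d).2 ?_, hdet⟩
    · linear_combination (-a) * h₃ + b * h₁ - a ^ q * hdet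
    · linear_combination b * h₄ - a * h₂ - b ^ q * hdet
    · linear_combination d * h₁ - c * h₃ - c ^ q * hdet
    · linear_combination d * h₄ - c * h₂ - d ^ q * hdet

theorem stmt_1_general (p : ℕ) (hp : p.Prime) (hodd : p ≠ 2) (h : ℕ)
    (q : ℕ) (hq : q = p ^ h)
    (F : Type) [Field F] [Fintype F] (hF : Fintype.card F = q ^ 2)
    (Fq : Subfield F) (hFq : ∀ x : F, x ∈ Fq ↔ x ^ q = x)
    (M : Subgroup (Matrix.GeneralLinearGroup (Fin 3) F))
    (hM : ∀ g : Matrix.GeneralLinearGroup (Fin 3) F, g ∈ M ↔ ∃ a b c d : F,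
      (g : Matrix (Fin 3) (Fin 3) F) = !![a, b, 0; c, d, 0; 0, 0, 1] ∧
      a * c ^ q - a ^ q * c = 0 ∧ b * d ^ q - b ^ q * d = 0 ∧
      b * c ^ q - a ^ q * d = -1 ∧ a * d ^ q - b ^ q * c = 1)
    (H : Subgroup (Matrix.GeneralLinearGroup (Fin 3) F))
    (hH : ∀ g : Matrix.GeneralLinearGroup (Fin 3) F, g ∈ H ↔ ∃ a b c d : F,
      (g : Matrix (Fin 3) (Fin 3) F) = !![a, b, 0; c, d, 0; 0, 0, 1] ∧
      a ∈ Fq ∧ b ∈ Fq ∧ c ∈ Fq ∧ d ∈ Fq ∧ a * d - b * c = 1) :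
    H ≤ M ∧
    (∀ g ∈ M, ∀ x ∈ H, g * x * g⁻¹ ∈ H) ∧
    Nonempty (H ≃* Matrix.SpecialLinearGroup (Fin 2) Fq) ∧
    ⁅M, M⁆ = H := by
  have hq_odd : Odd q := hq ▸ (hp.odd_of_ne_two hodd).pow
  have hHM := eq_inf_ker_det_of_mem_iff hFq hM hH
  have hrange := Subfield.range_slTwoToGLThree hH
  refine ⟨hHM ▸ inf_le_left, fun g hg x hx => ?_,
    ⟨((MonoidHom.ofInjective Fq.slTwoToGLThree_injective).trans
      (MulEquiv.subgroupCongr hrange)).symm⟩, le_antisymm ?_ ?_⟩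
  · rw [hHM] at hx ⊢
    exact ⟨M.mul_mem (M.mul_mem hg hx.1) (M.inv_mem hg),
      GeneralLinearGroup.det.normal_ker.conj_mem x hx.2 g⟩
  · exact hHM ▸ M.commutator_le_inf_ker GeneralLinearGroup.det
  · obtain ⟨μ, hμ⟩ := FiniteField.exists_pow_succ_eq_neg_one hF hq_odd
    have hD : GeneralLinearGroup.twistedDiag μ ∈ M := by
      refine (hM _).2 ⟨-μ, 0, 0, μ, rfl, ?_, ?_, ?_, ?_⟩ <;>
        simp only [zero_pow hq_odd.pos.ne', hq_odd.neg_pow]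
      · ring
      · ring
      · linear_combination hμ
      · linear_combination -hμ
    rw [← hrange]
    exact Fq.range_slTwoToGLThree_le_commutator
      (Ring.two_ne_zero (FiniteField.ringChar_ne_two_of_odd_card (hF ▸ hq_odd.pow)))
      (hrange ▸ hHM ▸ inf_le_left) hD

/-- Let `q` be a power of an odd prime.  The subset `H` of `𝓜`
consisting of the matrices `[[a,b,0],[c,d,0],[0,0,1]]` with `a,b,c,d ∈ 𝔽_q` and
`ad - bc = 1` is a normal subgroup of `𝓜` isomorphic to `SL(2,q)`, and `H` is the
commutator subgroup of `𝓜`. -/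
theorem stmt_1 (p : ℕ) (hp : p.Prime) (hodd : p ≠ 2) (h : ℕ) (hh : 1 ≤ h)
    (q : ℕ) (hq : q = p ^ h)
    (F : Type) [Field F] [Fintype F] (hF : Fintype.card F = q ^ 2)
    (Fq : Subfield F) (hFq : ∀ x : F, x ∈ Fq ↔ x ^ q = x)
    (M : Subgroup (Matrix.GeneralLinearGroup (Fin 3) F))
    (hM : ∀ g : Matrix.GeneralLinearGroup (Fin 3) F, g ∈ M ↔ ∃ a b c d : F,
      (g : Matrix (Fin 3) (Fin 3) F) = !![a, b, 0; c, d, 0; 0, 0, 1] ∧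
      a * c ^ q - a ^ q * c = 0 ∧ b * d ^ q - b ^ q * d = 0 ∧
      b * c ^ q - a ^ q * d = -1 ∧ a * d ^ q - b ^ q * c = 1)
    (H : Subgroup (Matrix.GeneralLinearGroup (Fin 3) F))
    (hH : ∀ g : Matrix.GeneralLinearGroup (Fin 3) F, g ∈ H ↔ ∃ a b c d : F,
      (g : Matrix (Fin 3) (Fin 3) F) = !![a, b, 0; c, d, 0; 0, 0, 1] ∧
      a ∈ Fq ∧ b ∈ Fq ∧ c ∈ Fq ∧ d ∈ Fq ∧ a * d - b * c = 1) :
    H ≤ M ∧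
    (∀ g ∈ M, ∀ x ∈ H, g * x * g⁻¹ ∈ H) ∧
    Nonempty (H ≃* Matrix.SpecialLinearGroup (Fin 2) Fq) ∧
    ⁅M, M⁆ = H :=
  stmt_1_general p hp hodd h q hq F hF Fq hFq M hM H hH
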